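/- Let q = 2^h, let {F_{α(λ),β(λ),λ} : λ ∈ Λ} be a closed set of conics in PG(2,q), and let α_d, β_d, λ_d ∈ GF(q) with Tr(α_d β_d) = 1 and λ_d ∉ Λ ∪ {0}. Suppose that for every λ ∈ Λ one has Tr( ((α(λ)λ + α_d λ_d)/(λ+λ_d)) · ((β(λ)λ + β_d λ_d)/(λ+λ_d)) ) = 1. Extend α and β to Λ' = Λ ∪ {λ_d} ∪ {λ + λ_d : λ ∈ Λ} by setting α(λ_d) = α_d, β(λ_d) = β_d, α(λ+λ_d) = (α(λ)λ + α_d λ_d)/(λ+λ_d) and β(λ+λ_d) = (β(λ)λ + β_d λ_d)/(λ+λ_d). Then {F_{α(μ),β(μ),μ} : μ ∈ Λ'} is a closed set of conics, and consequently {(0,0,1)} ∪ ⋃_{μ∈Λ'} F_{α(μ),β(μ),μ} is a maximal arc of degree 2(|Λ|+1) in PG(2,q). -/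

import Mathlib

/-!
In characteristic `2` the closedness of `{F_{α(λ),β(λ),λ} : λ ∈ Λ}` says exactly that `Λ ∪ {0}`
is closed under addition and that `λ ↦ λ α(λ)` and `λ ↦ λ β(λ)` are additive on it. Adjoining
`λ_d` adds the coset `Λ ∪ {0} + λ_d`, and both maps extend additively by
`λ + λ_d ↦ λ α(λ) + λ_d α_d`; the trace hypotheses are the conditions `Tr(α(μ) β(μ)) = 1` at
the new indices. So the extended family is closed, with `2 |Λ| + 1` indices.

Mathon's theorem then gives the arc. A line through the nucleus meets every conic in one point.
A line `z = u x + v y` meets `F_{α(λ),β(λ),λ}` in two or no points according as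
`σ(λ) = Tr(u² λ β(λ) + v² λ α(λ) + u² v² λ²)` is `1` or `0`; as `σ` is additive on `Λ ∪ {0}`,
it equals `1` nowhere or on exactly half of `Λ ∪ {0}`. The conics are pairwise disjoint since
`m F_λ + λ F_m` eliminates `z` and leaves an anisotropic binary form.
-/


open scoped Classical

noncomputable section

namespace MaxArc

variable (F : Type) [Field F] [Fintype F]

/-- The absolute trace map of `GF(2^h)` over `GF(2)`, valued in the field itself
(the prime subfield is identified with `{0,1}`). -/
def tr (h : ℕ) (x : F) : F := ∑ i ∈ Finset.range h, x ^ 2 ^ i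

/-- The points of `PG(2,q)`. -/
abbrev Pt := Projectivization F (Fin 3 → F)

/-- The conic `F_{α,β,λ} = {(x,y,z) : α x² + x y + β y² + λ z² = 0}` of `PG(2,q)`.
(The defining equation is homogeneous, so evaluating at the chosen representative
is independent of the choice.) -/
def conicSet (a b l : F) : Set (Pt F) :=
  {P | a * P.rep 0 ^ 2 + P.rep 0 * P.rep 1 + b * P.rep 1 ^ 2 + l * P.rep 2 ^ 2 = 0}

/-- The lines of `PG(2,q)`: zero sets of nonzero linear forms. -/
def IsLine (L : Set (Pt F)) : Prop :=
  ∃ u v w : F, ¬(u = 0 ∧ v = 0 ∧ w = 0) ∧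
    L = {P | u * P.rep 0 + v * P.rep 1 + w * P.rep 2 = 0}

/-- A maximal arc of degree `d`: a nonempty proper set of points met by every line
in exactly `0` or `d` points. -/
def IsMaximalArc (K : Set (Pt F)) (d : ℕ) : Prop :=
  K.Nonempty ∧ K ≠ Set.univ ∧
    ∀ L : Set (Pt F), IsLine F L → (K ∩ L).ncard = 0 ∨ (K ∩ L).ncard = d

/-- The point `(0,0,1)` of `PG(2,q)`. -/
def pt001 : Pt F := Projectivization.mk F ![0, 0, 1] (by
  intro hc
  have h2 := congrFun hc 2
  simp at h2)

/-- A collineation of `PG(2,q)`: the permutation of the point set induced by an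
invertible `σ`-semilinear map of `F³` (written as an invertible matrix composed
with a field automorphism `σ`). -/
def IsCollineation (g : Pt F → Pt F) : Prop :=
  ∃ σ : F ≃+* F, ∃ M : Matrix (Fin 3) (Fin 3) F, IsUnit M.det ∧
    ∀ (v : Fin 3 → F) (hv : v ≠ 0) (hv' : M.mulVec (fun i => σ (v i)) ≠ 0),
      g (Projectivization.mk F v hv) = Projectivization.mk F (M.mulVec (fun i => σ (v i))) hv'

/-- A closed set of conics `{F_{a(λ), b(λ), λ} : λ ∈ Λ}` in `PG(2,q)`, `q = 2^h`. -/
def IsClosedConicSet (h : ℕ) (Λ : Finset F) (a b : F → F) : Prop :=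
  (0 : F) ∉ Λ ∧ (∀ l ∈ Λ, tr F h (a l * b l) = 1) ∧
    ∀ l ∈ Λ, ∀ l' ∈ Λ, l ≠ l' →
      l + l' ∈ Λ ∧ a (l + l') = (a l * l + a l' * l') / (l + l') ∧
        b (l + l') = (b l * l + b l' * l') / (l + l')

/-- The point set of a (Mathon) arc obtained from a family of conics: the union of
the conics together with the common nucleus `(0,0,1)`. -/
def mathonSet (Λ : Finset F) (a b : F → F) : Set (Pt F) :=
  {pt001 F} ∪ ⋃ l ∈ Λ, conicSet F (a l) (b l) l

/-- The Denniston point set determined by `α` and a set `A ⊆ GF(q)`. -/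
def dennistonSet (a : F) (A : Set F) : Set (Pt F) :=
  {pt001 F} ∪ ⋃ l ∈ A \ {0}, conicSet F a 1 l

/-- A degree 4 maximal arc of Denniston type: the image under a collineation of
`{(0,0,1)} ∪ ⋃_{λ ∈ A \ {0}} F_{α,1,λ}` with `Tr(α) = 1` and `A` an additive
subgroup of order 4. -/
def IsDenniston4 (h : ℕ) (K : Set (Pt F)) : Prop :=
  ∃ a : F, tr F h a = 1 ∧ ∃ A : AddSubgroup F, Nat.card A = 4 ∧
    ∃ g : Pt F → Pt F, IsCollineation F g ∧ g '' dennistonSet F a (A : Set F) = K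

/-- `C` is a nondegenerate conic of `PG(2,q)` with nucleus `n`: the zero set of a
nonzero quadratic form, consisting of exactly `q+1` points no three of which are
collinear, all of whose tangent lines pass through `n`. -/
def IsConicWithNucleus (C : Set (Pt F)) (n : Pt F) : Prop :=
  (∃ a b c d e f : F, ¬(a = 0 ∧ b = 0 ∧ c = 0 ∧ d = 0 ∧ e = 0 ∧ f = 0) ∧
      C = {P | a * P.rep 0 ^ 2 + b * P.rep 1 ^ 2 + c * P.rep 2 ^ 2 +
        d * P.rep 0 * P.rep 1 + e * P.rep 0 * P.rep 2 + f * P.rep 1 * P.rep 2 = 0}) ∧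
    C.ncard = Fintype.card F + 1 ∧
    (∀ L : Set (Pt F), IsLine F L → (C ∩ L).ncard ≤ 2) ∧
    (∀ L : Set (Pt F), IsLine F L → (C ∩ L).ncard = 1 → n ∈ L)

/-- A maximal arc of degree `d` of Mathon type in `PG(2,q)`, `q = 2^h`. -/
def IsMathonType (h : ℕ) (K : Set (Pt F)) (d : ℕ) : Prop :=
  IsMaximalArc F K d ∧
    ∃ g : Pt F → Pt F, IsCollineation F g ∧ ∃ (Λ : Finset F) (a b : F → F),
      IsClosedConicSet F h Λ a b ∧ Λ.card + 1 = d ∧ g '' K = mathonSet F Λ a b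

/-- A maximal arc of degree `d` of Mathon type in `PG(2,q)` with nucleus `n`
(the preimage of `(0,0,1)` under a collineation realizing the Mathon description). -/
def IsMathonWithNucleus (h : ℕ) (K : Set (Pt F)) (d : ℕ) (n : Pt F) : Prop :=
  IsMaximalArc F K d ∧
    ∃ g : Pt F → Pt F, IsCollineation F g ∧ g n = pt001 F ∧
      ∃ (Λ : Finset F) (a b : F → F),
        IsClosedConicSet F h Λ a b ∧ Λ.card + 1 = d ∧ g '' K = mathonSet F Λ a b

/-- A maximal arc of Denniston type: Mathon type where the closed set of conics can
be chosen with `α` and `β` constant. -/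
def IsDennistonType (h : ℕ) (K : Set (Pt F)) : Prop :=
  ∃ g : Pt F → Pt F, IsCollineation F g ∧ ∃ (a b : F) (Λ : Finset F),
    IsClosedConicSet F h Λ (fun _ => a) (fun _ => b) ∧
    g '' K = mathonSet F Λ (fun _ => a) (fun _ => b)

/-- A proper Mathon arc of degree `d`: a Mathon arc that is not of Denniston type. -/
def IsProperMathon (h : ℕ) (K : Set (Pt F)) (d : ℕ) : Prop :=
  IsMathonType F h K d ∧ ¬ IsDennistonType F h K

end MaxArc

namespace MaxArc

open Finset Polynomial

variable {F : Type} [Field F]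

section Trace

theorem tr_zero (h : ℕ) : tr F h 0 = 0 := by
  simp [tr]

theorem card_filter_tr_eq_zero_le [Fintype F] {h : ℕ} (hh : h ≠ 0) :
    #{x : F | tr F h x = 0} ≤ 2 ^ (h - 1) := by
  set p : F[X] := ∑ i ∈ range h, X ^ 2 ^ i
  have hp : p ≠ 0 := by
    have hcoeff : p.coeff 1 = 1 := by
      rw [finsetSum_coeff, sum_eq_single 0 (fun i _ hi => ?_) (by simpa using hh)]
      · simp
      · simp [coeff_X_pow, (Nat.one_lt_two_pow hi).ne]
    rintro hp0
    simp [hp0] at hcoeff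
  have hdeg : p.natDegree ≤ 2 ^ (h - 1) :=
    natDegree_sum_le_of_forall_le _ _ fun i hi => by
      rw [natDegree_X_pow]
      exact Nat.pow_le_pow_right two_pos (by have := mem_range.mp hi; omega)
  refine (card_le_degree_of_subset_roots fun x hx => ?_).trans hdeg
  rw [mem_roots hp, IsRoot, eval_finsetSum]
  simpa [tr] using (mem_filter.mp hx).2

theorem tr_add [CharP F 2] (h : ℕ) (x y : F) : tr F h (x + y) = tr F h x + tr F h y := by
  simp only [tr, add_pow_char_pow, sum_add_distrib]

theorem card_filter_sq_add_self_eq_le [Fintype F] [CharP F 2] (y : F) :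
    #{s : F | s ^ 2 + s = y} ≤ 2 := by
  rcases eq_empty_or_nonempty ({s | s ^ 2 + s = y} : Finset F) with he | ⟨s₀, hs₀⟩
  · simp [he]
  refine (card_le_card (t := {s₀, s₀ + 1}) fun s hs => ?_).trans card_le_two
  have hss : (s + s₀) * (s + s₀ + 1) = 0 := by
    linear_combination (mem_filter.mp hs).2 - (mem_filter.mp hs₀).2
      + (s * s₀ + s₀ ^ 2 + s₀) * CharTwo.two_eq_zero (R := F)
  rcases mul_eq_zero.mp hss with hs' | hs'
  · simp [CharTwo.add_eq_zero.mp hs']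
  · simp [show s = s₀ + 1 by linear_combination hs' - (s₀ + 1) * CharTwo.two_eq_zero (R := F)]

variable [Fintype F] {h : ℕ} (hcard : Fintype.card F = 2 ^ h)
include hcard

theorem tr_sq (x : F) : tr F h (x ^ 2) = tr F h x := by
  have hx : x ^ 2 ^ h = x := hcard ▸ FiniteField.pow_card x
  have hshift := sum_range_succ' (fun i => x ^ 2 ^ i) h
  rw [sum_range_succ, hx, pow_zero, pow_one] at hshift
  simp only [tr, ← pow_mul, ← pow_succ']
  exact (add_right_cancel hshift).symm

theorem tr_sq_add_self (x : F) : tr F h (x ^ 2 + x) = 0 := by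
  have := charP_of_card_eq_prime_pow hcard
  rw [tr_add, tr_sq hcard, CharTwo.add_self_eq_zero]

theorem tr_eq_zero_or_one (x : F) : tr F h x = 0 ∨ tr F h x = 1 := by
  have := charP_of_card_eq_prime_pow hcard
  refine IsIdempotentElem.iff_eq_zero_or_one.mp ?_
  have hfrob : tr F h x ^ 2 = tr F h (x ^ 2) := by
    simp only [tr, CharTwo.sum_sq, ← pow_mul, mul_comm]
  rw [IsIdempotentElem, ← sq, hfrob, tr_sq hcard]

-- Artin–Schreier: `s ↦ s² + s` is two-to-one into the kernel of the trace, which has at most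
-- `q / 2` elements, so it is onto that kernel.
theorem exists_sq_add_self_eq {c : F} (hc : tr F h c = 0) : ∃ s : F, s ^ 2 + s = c := by
  have := charP_of_card_eq_prime_pow hcard
  by_contra! hno
  have hh : h ≠ 0 := by
    rintro rfl
    exact (Fintype.one_lt_card (α := F)).ne' (by simpa using hcard)
  set K : Finset F := {x | tr F h x = 0}
  have hcK : c ∈ K := by simpa [K] using hc
  have hmaps : ∀ s ∈ (univ : Finset F), s ^ 2 + s ∈ K.erase c := fun s _ =>
    mem_erase.mpr ⟨hno s, by simpa [K] using tr_sq_add_self hcard s⟩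
  have hle := card_le_mul_card_image_of_maps_to hmaps 2 fun y _ => card_filter_sq_add_self_eq_le y
  have hK : #K ≤ 2 ^ (h - 1) := card_filter_tr_eq_zero_le hh
  rw [card_univ, hcard, card_erase_of_mem hcK] at hle
  have hpow : 2 ^ h = 2 * 2 ^ (h - 1) := by rw [← pow_succ']; congr 1; omega
  have := card_pos.mpr ⟨c, hcK⟩
  omega

end Trace

section BinaryQuadratic

theorem exists_eq_mul_of_mul_eq_mul {u v x y : F} (huv : ¬(u = 0 ∧ v = 0)) (h : u * x = v * y) :
    ∃ c, x = c * v ∧ y = c * u := by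
  by_cases hv : v = 0
  · have hu : u ≠ 0 := fun hu => huv ⟨hu, hv⟩
    subst hv
    refine ⟨y / u, ?_, by field_simp⟩
    simpa [hu] using h
  · exact ⟨x / v, by field_simp, by field_simp; linear_combination h.symm⟩

theorem eq_zero_of_quadratic_eq_zero [Fintype F] {h : ℕ} (hcard : Fintype.card F = 2 ^ h)
    {A B x y : F} (htr : tr F h (A * B) = 1) (hq : A * x ^ 2 + x * y + B * y ^ 2 = 0) :
    x = 0 ∧ y = 0 := by
  have := charP_of_card_eq_prime_pow hcard
  have hA : A ≠ 0 := by
    rintro rfl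
    simp [tr_zero] at htr
  have hy : y = 0 := by
    by_contra hy
    have hroot : (A * x / y) ^ 2 + A * x / y = A * B := by
      field_simp
      linear_combination hq - B * y ^ 2 * CharTwo.two_eq_zero (R := F)
    simp [← hroot, tr_sq_add_self hcard] at htr
  subst hy
  exact ⟨by simpa [hA] using hq, rfl⟩

/-- A root `s` of `s² + s = AB` factors the binary form:
`s (A x² + x y + B y²) = (A x + s y) (s x + B y)`. -/
theorem quadratic_eq_zero_cases [CharP F 2] {A B s x y : F} (hs : s ^ 2 + s = A * B)
    (hq : A * x ^ 2 + x * y + B * y ^ 2 = 0) : A * x = s * y ∨ s * x = B * y := by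
  have hfac : (A * x + s * y) * (s * x + B * y) = 0 := by
    linear_combination s * hq + x * y * hs + x * y * (A * B - s) * CharTwo.two_eq_zero (R := F)
  rcases mul_eq_zero.mp hfac with h | h
  · exact Or.inl (CharTwo.add_eq_zero.mp h)
  · exact Or.inr (CharTwo.add_eq_zero.mp h)

end BinaryQuadratic

section AdditiveClosure

def AddClosed (S : Finset F) : Prop :=
  ∀ x ∈ S, ∀ y ∈ S, x + y ∈ S

def AdditiveOn (S : Finset F) (g : F → F) : Prop :=
  ∀ x ∈ S, ∀ y ∈ S, g (x + y) = g x + g y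

variable {S : Finset F}

theorem mem_union_image_add {d μ : F} :
    μ ∈ S ∪ S.image (· + d) ↔ μ ∈ S ∨ ∃ x ∈ S, x + d = μ := by
  rw [mem_union, mem_image]

theorem insert_zero_union_image_add (Λ : Finset F) (d : F) :
    insert 0 (Λ ∪ {d} ∪ Λ.image (· + d)) = insert 0 Λ ∪ (insert 0 Λ).image (· + d) := by
  ext μ
  simp only [mem_insert, mem_union, mem_singleton, mem_image, image_insert, zero_add]
  tauto

variable [CharP F 2]

theorem card_filter_eq_one_of_additiveOn (hS : AddClosed S) {σ : F → F} (hσ : AdditiveOn S σ)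
    (h01 : ∀ x ∈ S, σ x = 0 ∨ σ x = 1) :
    #{x ∈ S | σ x = 1} = 0 ∨ 2 * #{x ∈ S | σ x = 1} = #S := by
  rcases eq_empty_or_nonempty {x ∈ S | σ x = 1} with he | ⟨x₀, hx₀⟩
  · exact Or.inl (by rw [he, card_empty])
  right
  obtain ⟨hx₀S, hσx₀⟩ := mem_filter.mp hx₀
  have hswap : #{x ∈ S | ¬σ x = 1} = #{x ∈ S | σ x = 1} := by
    refine card_nbij' (· + x₀) (· + x₀) (fun x hx => ?_) (fun x hx => ?_)
      (fun x _ => CharTwo.add_cancel_right x x₀) (fun x _ => CharTwo.add_cancel_right x x₀)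
    · obtain ⟨hxS, hσx⟩ := mem_filter.mp hx
      refine mem_filter.mpr ⟨hS x hxS x₀ hx₀S, ?_⟩
      rw [hσ x hxS x₀ hx₀S, hσx₀, (h01 x hxS).resolve_right hσx, zero_add]
    · obtain ⟨hxS, hσx⟩ := mem_filter.mp hx
      refine mem_filter.mpr ⟨hS x hxS x₀ hx₀S, ?_⟩
      rw [hσ x hxS x₀ hx₀S, hσx₀, hσx, CharTwo.add_self_eq_zero]
      exact zero_ne_one
  rw [← card_filter_add_card_filter_not (s := S) (fun x => σ x = 1), hswap, two_mul]

theorem AddClosed.add_notMem (hS : AddClosed S) {x d : F} (hx : x ∈ S) (hd : d ∉ S) :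
    x + d ∉ S :=
  fun hxd => hd (by simpa [CharTwo.add_cancel_left] using hS x hx _ hxd)

theorem AddClosed.union_image_add (hS : AddClosed S) (d : F) :
    AddClosed (S ∪ S.image (· + d)) := by
  intro μ hμ ν hν
  simp only [mem_union_image_add] at hμ hν ⊢
  rcases hμ with hx | ⟨x, hx, rfl⟩ <;> rcases hν with hy | ⟨y, hy, rfl⟩
  · exact Or.inl (hS _ hx _ hy)
  · exact Or.inr ⟨μ + y, hS _ hx _ hy, by ring⟩
  · exact Or.inr ⟨x + ν, hS _ hx _ hy, by ring⟩
  · exact Or.inl (by rw [add_add_add_comm, CharTwo.add_self_eq_zero, add_zero]; exact hS _ hx _ hy)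

theorem AdditiveOn.union_image_add (hS : AddClosed S) {g g' : F → F} (hg : AdditiveOn S g)
    {d c : F} (h₁ : ∀ x ∈ S, g' x = g x) (h₂ : ∀ x ∈ S, g' (x + d) = g x + c) :
    AdditiveOn (S ∪ S.image (· + d)) g' := by
  intro μ hμ ν hν
  rw [mem_union_image_add] at hμ hν
  rcases hμ with hx | ⟨x, hx, rfl⟩ <;> rcases hν with hy | ⟨y, hy, rfl⟩
  · rw [h₁ _ (hS _ hx _ hy), hg _ hx _ hy, h₁ _ hx, h₁ _ hy]
  · rw [← add_assoc, h₂ _ (hS _ hx _ hy), hg _ hx _ hy, h₁ _ hx, h₂ _ hy, add_assoc]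
  · rw [add_right_comm, h₂ _ (hS _ hx _ hy), hg _ hx _ hy, h₁ _ hy, h₂ _ hx, add_right_comm]
  · rw [add_add_add_comm, CharTwo.add_self_eq_zero, add_zero, h₁ _ (hS _ hx _ hy),
      hg _ hx _ hy, h₂ _ hx, h₂ _ hy]
    linear_combination -c * CharTwo.two_eq_zero (R := F)

theorem card_union_image_add (hS : AddClosed S) {d : F} (hd : d ∉ S) :
    #(S ∪ S.image (· + d)) = 2 * #S := by
  rw [card_union_of_disjoint, card_image_of_injective _ (add_left_injective d), two_mul]
  refine disjoint_left.mpr fun μ hμ hμ' => ?_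
  obtain ⟨x, hx, rfl⟩ := mem_image.mp hμ'
  exact hS.add_notMem hx hd hμ

theorem addClosed_insert_zero_iff {Λ : Finset F} :
    AddClosed (insert 0 Λ) ↔ ∀ l ∈ Λ, ∀ m ∈ Λ, l ≠ m → l + m ∈ Λ := by
  refine ⟨fun hS l hl m hm hlm => ?_, fun hΛ x hx y hy => ?_⟩
  · exact (mem_insert.mp (hS l (mem_insert_of_mem hl) m (mem_insert_of_mem hm))).resolve_left
      fun h => hlm (CharTwo.add_eq_zero.mp h)
  · rcases mem_insert.mp hx with rfl | hx
    · simpa using hy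
    rcases mem_insert.mp hy with rfl | hy
    · simpa using mem_insert_of_mem hx
    rcases eq_or_ne x y with rfl | hxy
    · simp [CharTwo.add_self_eq_zero]
    · exact mem_insert_of_mem (hΛ x hx y hy hxy)

theorem additiveOn_insert_zero_iff {Λ : Finset F} {g : F → F} (hg : g 0 = 0) :
    AdditiveOn (insert 0 Λ) g ↔ ∀ l ∈ Λ, ∀ m ∈ Λ, l ≠ m → g (l + m) = g l + g m := by
  refine ⟨fun hS l hl m hm _ => hS l (mem_insert_of_mem hl) m (mem_insert_of_mem hm),
    fun hΛ x hx y hy => ?_⟩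
  rcases mem_insert.mp hx with rfl | hx
  · simp [hg]
  rcases mem_insert.mp hy with rfl | hy
  · simp [hg]
  rcases eq_or_ne x y with rfl | hxy
  · simp [CharTwo.add_self_eq_zero, hg]
  · exact hΛ x hx y hy hxy

end AdditiveClosure

section ClosedConicSet

variable [CharP F 2] {h : ℕ} {Λ : Finset F} {a b : F → F}

theorem isClosedConicSet_iff :
    IsClosedConicSet F h Λ a b ↔ 0 ∉ Λ ∧ (∀ l ∈ Λ, tr F h (a l * b l) = 1) ∧
      AddClosed (insert 0 Λ) ∧ AdditiveOn (insert 0 Λ) (fun l => l * a l) ∧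
        AdditiveOn (insert 0 Λ) (fun l => l * b l) := by
  have hdiv (f : F → F) {l m : F} (hlm : l ≠ m) : f (l + m) = (f l * l + f m * m) / (l + m) ↔
      (l + m) * f (l + m) = l * f l + m * f m := by
    rw [eq_div_iff fun h => hlm (CharTwo.add_eq_zero.mp h)]
    constructor <;> intro h <;> linear_combination h
  rw [IsClosedConicSet, addClosed_insert_zero_iff,
    additiveOn_insert_zero_iff (g := fun l => l * a l) (zero_mul _),
    additiveOn_insert_zero_iff (g := fun l => l * b l) (zero_mul _)]
  refine and_congr_right' (and_congr_right' ⟨fun hcl => ⟨?_, ?_, ?_⟩, fun hcl => ?_⟩)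
  · exact fun l hl m hm hlm => (hcl l hl m hm hlm).1
  · exact fun l hl m hm hlm => (hdiv a hlm).mp (hcl l hl m hm hlm).2.1
  · exact fun l hl m hm hlm => (hdiv b hlm).mp (hcl l hl m hm hlm).2.2
  · obtain ⟨hS, ha, hb⟩ := hcl
    exact fun l hl m hm hlm =>
      ⟨hS l hl m hm hlm, (hdiv a hlm).mpr (ha l hl m hm hlm), (hdiv b hlm).mpr (hb l hl m hm hlm)⟩

theorem zero_notMem_union_image_add (hΛ : (0 : F) ∉ Λ) {d : F} (hd : d ∉ Λ) (hd0 : d ≠ 0) :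
    (0 : F) ∉ Λ ∪ {d} ∪ Λ.image (· + d) := by
  simp only [mem_union, mem_singleton, mem_image, not_or, not_exists, not_and]
  exact ⟨⟨hΛ, hd0.symm⟩, fun l hl hl0 => hd (CharTwo.add_eq_zero.mp hl0 ▸ hl)⟩

theorem card_union_singleton_union_image_add (hS : AddClosed (insert 0 Λ)) (hΛ : (0 : F) ∉ Λ)
    {d : F} (hd : d ∉ Λ) (hd0 : d ≠ 0) :
    #(Λ ∪ {d} ∪ Λ.image (· + d)) + 1 = 2 * (#Λ + 1) := by
  rw [← card_insert_of_notMem (zero_notMem_union_image_add hΛ hd hd0),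
    insert_zero_union_image_add, card_union_image_add hS (by simp [hd, hd0]),
    card_insert_of_notMem hΛ]

end ClosedConicSet

section Extension

def extendCoeff (Λ : Finset F) (d : F) (a : F → F) (αd : F) : F → F := fun μ =>
  if μ ∈ Λ then a μ else if μ = d then αd else (a (μ - d) * (μ - d) + αd * d) / μ

variable {Λ : Finset F} {d αd : F} {a : F → F}

theorem extendCoeff_of_mem {l : F} (hl : l ∈ Λ) : extendCoeff Λ d a αd l = a l :=
  if_pos hl

theorem extendCoeff_self (hd : d ∉ Λ) : extendCoeff Λ d a αd d = αd := by
  simp [extendCoeff, hd]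

theorem extendCoeff_add {l : F} (hl : l + d ∉ Λ) (hl0 : l ≠ 0) :
    extendCoeff Λ d a αd (l + d) = (a l * l + αd * d) / (l + d) := by
  simp [extendCoeff, hl, hl0]

variable [CharP F 2]

theorem additiveOn_extendCoeff (hS : AddClosed (insert 0 Λ))
    (ha : AdditiveOn (insert 0 Λ) (fun l => l * a l)) (hd : d ∉ insert 0 Λ) :
    AdditiveOn (insert 0 Λ ∪ (insert 0 Λ).image (· + d))
      (fun μ => μ * extendCoeff Λ d a αd μ) := by
  have hdΛ : d ∉ Λ := fun h => hd (mem_insert_of_mem h)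
  refine ha.union_image_add hS (c := d * αd) (fun x hx => ?_) (fun x hx => ?_)
  all_goals rcases eq_or_ne x 0 with rfl | hx0
  · simp
  · simp [extendCoeff_of_mem ((mem_insert.mp hx).resolve_left hx0)]
  · simp [extendCoeff_self hdΛ]
  · have hxd : x + d ≠ 0 := fun h => hd (CharTwo.add_eq_zero.mp h ▸ hx)
    rw [extendCoeff_add (fun h => hS.add_notMem hx hd (mem_insert_of_mem h)) hx0]
    field_simp

theorem IsClosedConicSet.extend {h : ℕ} {b : F → F} {βd : F}
    (hcl : IsClosedConicSet F h Λ a b) (htrd : tr F h (αd * βd) = 1) (hd : d ∉ Λ) (hd0 : d ≠ 0)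
    (htr : ∀ l ∈ Λ, tr F h
      (((a l * l + αd * d) / (l + d)) * ((b l * l + βd * d) / (l + d))) = 1) :
    IsClosedConicSet F h (Λ ∪ {d} ∪ Λ.image (· + d)) (extendCoeff Λ d a αd)
      (extendCoeff Λ d b βd) := by
  obtain ⟨hΛ, htrΛ, hS, ha, hb⟩ := isClosedConicSet_iff.mp hcl
  have hdS : d ∉ insert 0 Λ := by simp [hd, hd0]
  refine isClosedConicSet_iff.mpr
    ⟨zero_notMem_union_image_add hΛ hd hd0, fun μ hμ => ?_, ?_, ?_, ?_⟩
  · simp only [mem_union, mem_singleton, mem_image] at hμ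
    rcases hμ with (hμ | rfl) | ⟨l, hl, rfl⟩
    · rw [extendCoeff_of_mem hμ, extendCoeff_of_mem hμ, htrΛ μ hμ]
    · rw [extendCoeff_self hd, extendCoeff_self hd, htrd]
    · have hl0 : l ≠ 0 := fun h => hΛ (h ▸ hl)
      have hld := fun h => hS.add_notMem (mem_insert_of_mem hl) hdS (mem_insert_of_mem h)
      rw [extendCoeff_add hld hl0, extendCoeff_add hld hl0, htr l hl]
  all_goals rw [insert_zero_union_image_add]
  · exact hS.union_image_add d
  · exact additiveOn_extendCoeff hS ha hdS
  · exact additiveOn_extendCoeff hS hb hdS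

end Extension

section Plane

open Projectivization

variable (F) in
def lineSet (u v w : F) : Set (Pt F) :=
  {P | u * P.rep 0 + v * P.rep 1 + w * P.rep 2 = 0}

theorem exists_rep_mk_eq_smul {x : Fin 3 → F} (hx : x ≠ 0) :
    ∃ c : F, c ≠ 0 ∧ (mk F x hx).rep = c • x := by
  obtain ⟨c, hc⟩ := exists_smul_eq_mk_rep F x hx
  exact ⟨c, c.ne_zero, hc.symm⟩

theorem mem_conicSet_mk {a b l : F} {x : Fin 3 → F} (hx : x ≠ 0) :
    mk F x hx ∈ conicSet F a b l ↔ a * x 0 ^ 2 + x 0 * x 1 + b * x 1 ^ 2 + l * x 2 ^ 2 = 0 := by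
  obtain ⟨c, hc, hrep⟩ := exists_rep_mk_eq_smul hx
  have hhom : a * (c * x 0) ^ 2 + c * x 0 * (c * x 1) + b * (c * x 1) ^ 2 + l * (c * x 2) ^ 2 =
      c ^ 2 * (a * x 0 ^ 2 + x 0 * x 1 + b * x 1 ^ 2 + l * x 2 ^ 2) := by ring
  simp [conicSet, hrep, hhom, hc]

theorem mem_lineSet_mk {u v w : F} {x : Fin 3 → F} (hx : x ≠ 0) :
    mk F x hx ∈ lineSet F u v w ↔ u * x 0 + v * x 1 + w * x 2 = 0 := by
  obtain ⟨c, hc, hrep⟩ := exists_rep_mk_eq_smul hx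
  have hhom : u * (c * x 0) + v * (c * x 1) + w * (c * x 2) =
      c * (u * x 0 + v * x 1 + w * x 2) := by
    ring
  simp [lineSet, hrep, hhom, hc]

theorem eq_mk_of_rep_eq_mul (P : Pt F) {x : Fin 3 → F} (hx : x ≠ 0) {c : F}
    (h₀ : P.rep 0 = c * x 0) (h₁ : P.rep 1 = c * x 1) (h₂ : P.rep 2 = c * x 2) :
    P = mk F x hx := by
  rw [← mk_rep P, mk_eq_mk_iff']
  refine ⟨c, funext fun i => ?_⟩
  fin_cases i <;> simp [h₀, h₁, h₂]

theorem pt001_mem_conicSet_iff {a b l : F} : pt001 F ∈ conicSet F a b l ↔ l = 0 := by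
  rw [pt001, mem_conicSet_mk]
  simp

theorem pt001_mem_lineSet_iff {u v w : F} : pt001 F ∈ lineSet F u v w ↔ w = 0 := by
  rw [pt001, mem_lineSet_mk]
  simp

theorem ncard_conicSet_inter_lineSet_of_nucleus [Finite F] [CharP F 2] {a b l u v : F}
    (hl : l ≠ 0) (huv : ¬(u = 0 ∧ v = 0)) : (conicSet F a b l ∩ lineSet F u v 0).ncard = 1 := by
  obtain ⟨r, hr⟩ := isSquare_of_charTwo' ((a * v ^ 2 + v * u + b * u ^ 2) / l)
  have hlr : l * r ^ 2 = a * v ^ 2 + v * u + b * u ^ 2 := by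
    rw [sq, ← hr]
    field_simp
  have hx : ![v, u, r] ≠ 0 := fun h =>
    huv ⟨by simpa using congrFun h 1, by simpa using congrFun h 0⟩
  rw [Set.ncard_eq_one]
  refine ⟨mk F _ hx, Set.eq_singleton_iff_unique_mem.mpr ⟨⟨?_, ?_⟩, fun P ⟨hC, hL⟩ => ?_⟩⟩
  · rw [mem_conicSet_mk]
    simp only [Matrix.cons_val_zero, Matrix.cons_val_one, Matrix.cons_val]
    linear_combination hlr + (a * v ^ 2 + v * u + b * u ^ 2) * CharTwo.two_eq_zero (R := F)
  · rw [mem_lineSet_mk]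
    simp only [Matrix.cons_val_zero, Matrix.cons_val_one, Matrix.cons_val, zero_mul, add_zero]
    linear_combination u * v * CharTwo.two_eq_zero (R := F)
  · simp only [conicSet, lineSet, Set.mem_ofPred_eq, zero_mul, add_zero] at hC hL
    obtain ⟨c, hx, hy⟩ := exists_eq_mul_of_mul_eq_mul huv (CharTwo.add_eq_zero.mp hL)
    have hz : P.rep 2 = c * r := by
      refine CharTwo.sq_injective (mul_left_cancel₀ hl ?_)
      rw [hx, hy] at hC
      linear_combination hC - c ^ 2 * hlr
        - c ^ 2 * (a * v ^ 2 + v * u + b * u ^ 2) * CharTwo.two_eq_zero (R := F)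
    exact eq_mk_of_rep_eq_mul P _ (by simpa using hx) (by simpa using hy) (by simpa using hz)

theorem conic_line_eq_zero_iff [CharP F 2] {a b l u v w x y z : F} (hw : w ≠ 0) :
    (a * x ^ 2 + x * y + b * y ^ 2 + l * z ^ 2 = 0 ∧ u * x + v * y + w * z = 0) ↔
      ((a + l * (u / w) ^ 2) * x ^ 2 + x * y + (b + l * (v / w) ^ 2) * y ^ 2 = 0 ∧
        z = u / w * x + v / w * y) := by
  have hline : u * x + v * y + w * z = 0 ↔ z = u / w * x + v / w * y := by
    rw [CharTwo.add_eq_zero, eq_comm, mul_comm, ← eq_div_iff hw, add_div, mul_div_right_comm,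
      mul_div_right_comm]
  rw [hline]
  constructor <;> rintro ⟨hq, rfl⟩ <;> refine ⟨?_, rfl⟩
  · linear_combination hq - l * (u / w) * (v / w) * x * y * CharTwo.two_eq_zero (R := F)
  · linear_combination hq + l * (u / w) * (v / w) * x * y * CharTwo.two_eq_zero (R := F)

variable [Fintype F] {h : ℕ} (hcard : Fintype.card F = 2 ^ h)
include hcard

theorem conicSet_inter_lineSet_eq_empty {a b l u v w : F} (hw : w ≠ 0)
    (htr : tr F h ((a + l * (u / w) ^ 2) * (b + l * (v / w) ^ 2)) = 1) :
    conicSet F a b l ∩ lineSet F u v w = ∅ := by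
  have := charP_of_card_eq_prime_pow hcard
  refine Set.eq_empty_of_forall_notMem fun P hP => P.rep_nonzero ?_
  obtain ⟨hq, hz⟩ := (conic_line_eq_zero_iff hw).mp hP
  obtain ⟨hx, hy⟩ := eq_zero_of_quadratic_eq_zero hcard htr hq
  ext i
  fin_cases i <;> simp [hx, hy, hz]

theorem ncard_conicSet_inter_lineSet_eq_two {a b l u v w : F} (hw : w ≠ 0)
    (htr : tr F h ((a + l * (u / w) ^ 2) * (b + l * (v / w) ^ 2)) = 0) :
    (conicSet F a b l ∩ lineSet F u v w).ncard = 2 := by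
  have := charP_of_card_eq_prime_pow hcard
  set A := a + l * (u / w) ^ 2
  set B := b + l * (v / w) ^ 2
  obtain ⟨s, hs, hs0⟩ : ∃ s : F, s ^ 2 + s = A * B ∧ s ≠ 0 := by
    obtain ⟨s, hs⟩ := exists_sq_add_self_eq hcard htr
    rcases eq_or_ne s 0 with rfl | hs0
    · exact ⟨1, by linear_combination hs + CharTwo.two_eq_zero (R := F), one_ne_zero⟩
    · exact ⟨s, hs, hs0⟩
  have hmem {x : Fin 3 → F} (hx : x ≠ 0) : mk F x hx ∈ conicSet F a b l ∩ lineSet F u v w ↔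
      A * x 0 ^ 2 + x 0 * x 1 + B * x 1 ^ 2 = 0 ∧ x 2 = u / w * x 0 + v / w * x 1 := by
    rw [Set.mem_inter_iff, mem_conicSet_mk, mem_lineSet_mk, conic_line_eq_zero_iff hw]
  have hx₁ : ![s, A, u / w * s + v / w * A] ≠ 0 := fun h => hs0 (by simpa using congrFun h 0)
  have hx₂ : ![B, s, u / w * B + v / w * s] ≠ 0 := fun h => hs0 (by simpa using congrFun h 1)
  rw [Set.ncard_eq_two]
  refine ⟨mk F _ hx₁, mk F _ hx₂, fun h12 => hs0 ?_, Set.ext fun P => ⟨fun hP => ?_, ?_⟩⟩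
  · obtain ⟨c, hc⟩ := (mk_eq_mk_iff' F _ _ hx₁ hx₂).mp h12
    have hc₀ : c * B = s := by simpa using congrFun hc 0
    have hc₁ : c * s = A := by simpa using congrFun hc 1
    linear_combination hs - s * hc₀ + B * hc₁ - (s ^ 2 - A * B) * CharTwo.two_eq_zero (R := F)
  · obtain ⟨hq, hz⟩ := (conic_line_eq_zero_iff hw).mp hP
    rcases quadratic_eq_zero_cases hs hq with h | h
    · obtain ⟨c, hx, hy⟩ := exists_eq_mul_of_mul_eq_mul (by simp [hs0]) h
      refine Or.inl (eq_mk_of_rep_eq_mul P _ (by simpa using hx) (by simpa using hy) ?_)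
      simp only [hz, hx, hy, Matrix.cons_val]
      ring
    · obtain ⟨c, hx, hy⟩ := exists_eq_mul_of_mul_eq_mul (by simp [hs0]) h
      refine Or.inr (eq_mk_of_rep_eq_mul P _ (by simpa using hx) (by simpa using hy) ?_)
      simp only [hz, hx, hy, Matrix.cons_val]
      ring
  · rintro (rfl | rfl) <;> rw [hmem] <;> refine ⟨?_, by simp⟩ <;>
      simp only [Matrix.cons_val_zero, Matrix.cons_val_one]
    · linear_combination A * hs + A ^ 2 * B * CharTwo.two_eq_zero (R := F)
    · linear_combination B * hs + A * B ^ 2 * CharTwo.two_eq_zero (R := F)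

end Plane

section MathonArc

open Projectivization

theorem ncard_mathonSet_inter [Finite F] {Λ : Finset F} {a b : F → F} (hΛ : (0 : F) ∉ Λ)
    (hdisj : (Λ : Set F).PairwiseDisjoint fun l => conicSet F (a l) (b l) l) (L : Set (Pt F)) :
    (mathonSet F Λ a b ∩ L).ncard =
      ({pt001 F} ∩ L).ncard + ∑ l ∈ Λ, (conicSet F (a l) (b l) l ∩ L).ncard := by
  have hnuc : Disjoint ({pt001 F} ∩ L) (⋃ l ∈ Λ, conicSet F (a l) (b l) l ∩ L) := by
    simp only [Set.disjoint_left, Set.mem_inter_iff, Set.mem_singleton_iff, Set.mem_iUnion]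
    rintro _ ⟨rfl, -⟩ ⟨l, hl, hC, -⟩
    exact hΛ (pt001_mem_conicSet_iff.mp hC ▸ hl)
  rw [mathonSet, Set.union_inter_distrib_right, Set.iUnion₂_inter,
    Set.ncard_union_eq hnuc (Set.toFinite _) (Set.toFinite _), ← Finset.set_biUnion_coe,
    Set.Finite.ncard_biUnion (Finset.finite_toSet Λ) (fun _ _ => Set.toFinite _)
      (hdisj.mono fun _ => Set.inter_subset_left), finsum_mem_coe_finset]

theorem mathonSet_ne_univ {h : ℕ} {Λ : Finset F} {a b : F → F}
    (htr : ∀ l ∈ Λ, tr F h (a l * b l) = 1) : mathonSet F Λ a b ≠ Set.univ := by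
  have hx : ![0, 1, 0] ≠ (0 : Fin 3 → F) := fun h => by simpa using congrFun h 1
  refine fun huniv => (huniv ▸ Set.mem_univ (mk F _ hx) : mk F _ hx ∈ mathonSet F Λ a b).elim ?_ ?_
  · rw [Set.mem_singleton_iff, pt001, mk_eq_mk_iff']
    rintro ⟨c, hc⟩
    simpa using congrFun hc 1
  · simp only [Set.mem_iUnion, mem_conicSet_mk]
    rintro ⟨l, hl, hC⟩
    have hb : b l = 0 := by simpa using hC
    have h1 := htr l hl
    rw [hb, mul_zero, tr_zero] at h1
    exact zero_ne_one h1

variable [Fintype F] {h : ℕ} (hcard : Fintype.card F = 2 ^ h)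
include hcard

theorem disjoint_conicSet {l m al am an bl bm bn : F} (hlm : l ≠ m) (hl : l ≠ 0)
    (ha : (l + m) * an = l * al + m * am) (hb : (l + m) * bn = l * bl + m * bm)
    (htrl : tr F h (al * bl) = 1) (htrm : tr F h (am * bm) = 1) (htrn : tr F h (an * bn) = 1) :
    Disjoint (conicSet F al bl l) (conicSet F am bm m) := by
  have := charP_of_card_eq_prime_pow hcard
  have two : (2 : F) = 0 := CharTwo.two_eq_zero
  have hν : l + m ≠ 0 := fun h => hlm (CharTwo.add_eq_zero.mp h)
  have hA : (l + m) * (al + am + an) = m * al + l * am := by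
    linear_combination ha + (l * al + m * am) * two
  have hB : (l + m) * (bl + bm + bn) = m * bl + l * bm := by
    linear_combination hb + (l * bl + m * bm) * two
  have hAB : (al + am + an) * (bl + bm + bn) = al * bl + am * bm + an * bn := by
    refine mul_left_cancel₀ (pow_ne_zero 2 hν) ?_
    linear_combination ((l + m) * (bl + bm)) * ha + ((l + m) * (al + am)) * hb
      + ((l + m) * ((l + m) * (al * bm + am * bl) + l * al * bl + m * am * bm)) * two
  have htr : tr F h ((al + am + an) * (bl + bm + bn)) = 1 := by
    rw [hAB, tr_add, tr_add, htrl, htrm, htrn]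
    linear_combination two
  refine Set.disjoint_left.mpr fun P hPl hPm => P.rep_nonzero ?_
  simp only [conicSet, Set.mem_ofPred_eq] at hPl hPm
  have hq :
      (al + am + an) * P.rep 0 ^ 2 + P.rep 0 * P.rep 1 + (bl + bm + bn) * P.rep 1 ^ 2 = 0 := by
    refine mul_left_cancel₀ hν ?_
    linear_combination m * hPl + l * hPm + P.rep 0 ^ 2 * hA + P.rep 1 ^ 2 * hB
      - l * m * P.rep 2 ^ 2 * two
  obtain ⟨hx, hy⟩ := eq_zero_of_quadratic_eq_zero hcard htr hq
  have hz : P.rep 2 = 0 := by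
    rw [hx, hy] at hPl
    simpa [hl] using hPl
  ext i
  fin_cases i <;> simp [hx, hy, hz]

theorem sum_ncard_conicSet_inter_lineSet_eq_zero_or {Λ : Finset F} {a b : F → F}
    (hΛ : (0 : F) ∉ Λ) (htr : ∀ l ∈ Λ, tr F h (a l * b l) = 1) (hS : AddClosed (insert 0 Λ))
    (ha : AdditiveOn (insert 0 Λ) (fun l => l * a l))
    (hb : AdditiveOn (insert 0 Λ) (fun l => l * b l)) {u v w : F} (hw : w ≠ 0) :
    ∑ l ∈ Λ, (conicSet F (a l) (b l) l ∩ lineSet F u v w).ncard = 0 ∨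
      ∑ l ∈ Λ, (conicSet F (a l) (b l) l ∩ lineSet F u v w).ncard = #Λ + 1 := by
  have := charP_of_card_eq_prime_pow hcard
  set σ : F → F := fun x =>
    tr F h ((u / w) ^ 2 * (x * b x) + (v / w) ^ 2 * (x * a x) + (u / w * (v / w)) ^ 2 * x ^ 2)
  have hsecant (l : F) (hl : l ∈ Λ) :
      tr F h ((a l + l * (u / w) ^ 2) * (b l + l * (v / w) ^ 2)) = 1 + σ l := by
    rw [← htr l hl, ← tr_add]
    ring_nf
  have hcount (l : F) (hl : l ∈ Λ) :
      (conicSet F (a l) (b l) l ∩ lineSet F u v w).ncard = if σ l = 1 then 2 else 0 := by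
    split_ifs with hσ
    · exact ncard_conicSet_inter_lineSet_eq_two hcard hw
        (by rw [hsecant l hl, hσ, CharTwo.add_self_eq_zero])
    · have hσ0 : σ l = 0 := (tr_eq_zero_or_one hcard _).resolve_right hσ
      rw [conicSet_inter_lineSet_eq_empty hcard hw (by rw [hsecant l hl, hσ0, add_zero]),
        Set.ncard_empty]
  have hσ : AdditiveOn (insert 0 Λ) σ := by
    intro x hx y hy
    simp only [σ, ← tr_add]
    have hax := ha x hx y hy
    have hbx := hb x hx y hy
    simp only at hax hbx
    rw [hax, hbx, CharTwo.add_sq]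
    ring_nf
  have hfilter : #{x ∈ insert 0 Λ | σ x = 1} = #{l ∈ Λ | σ l = 1} := by
    rw [filter_insert, if_neg (by simp [σ, tr_zero])]
  rw [sum_congr rfl hcount, sum_ite, sum_const_zero, sum_const, smul_eq_mul, add_zero, mul_comm,
    ← hfilter, ← card_insert_of_notMem hΛ]
  rcases card_filter_eq_one_of_additiveOn hS hσ (fun x _ => tr_eq_zero_or_one hcard _) with h0 | h2
  · exact Or.inl (by rw [h0, mul_zero])
  · exact Or.inr h2

theorem isMaximalArc_mathonSet {Λ : Finset F} {a b : F → F} (hcl : IsClosedConicSet F h Λ a b) :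
    IsMaximalArc F (mathonSet F Λ a b) (#Λ + 1) := by
  have := charP_of_card_eq_prime_pow hcard
  obtain ⟨hΛ, htr, hS, ha, hb⟩ := isClosedConicSet_iff.mp hcl
  have hdisj : (Λ : Set F).PairwiseDisjoint fun l => conicSet F (a l) (b l) l := by
    intro l hl m hm hlm
    have hl₀ : l ∈ insert 0 Λ := mem_insert_of_mem hl
    have hm₀ : m ∈ insert 0 Λ := mem_insert_of_mem hm
    have hlm' : l + m ∈ Λ :=
      (mem_insert.mp (hS l hl₀ m hm₀)).resolve_left fun h => hlm (CharTwo.add_eq_zero.mp h)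
    exact disjoint_conicSet hcard hlm (fun h => hΛ (h ▸ hl)) (ha l hl₀ m hm₀) (hb l hl₀ m hm₀)
      (htr l hl) (htr m hm) (htr _ hlm')
  refine ⟨⟨pt001 F, Or.inl rfl⟩, mathonSet_ne_univ htr, ?_⟩
  rintro L ⟨u, v, w, huvw, rfl⟩
  change (mathonSet F Λ a b ∩ lineSet F u v w).ncard = 0 ∨
    (mathonSet F Λ a b ∩ lineSet F u v w).ncard = #Λ + 1
  rw [ncard_mathonSet_inter hΛ hdisj]
  by_cases hw : w = 0
  · subst hw
    have huv : ¬(u = 0 ∧ v = 0) := fun ⟨hu, hv⟩ => huvw ⟨hu, hv, rfl⟩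
    right
    rw [Set.inter_eq_left.mpr (Set.singleton_subset_iff.mpr (pt001_mem_lineSet_iff.mpr rfl)),
      sum_congr rfl fun l hl => ncard_conicSet_inter_lineSet_of_nucleus (fun h => hΛ (h ▸ hl)) huv]
    simp [add_comm]
  · rw [Set.singleton_inter_eq_empty.mpr (mt pt001_mem_lineSet_iff.mp hw), Set.ncard_empty,
      zero_add]
    exact sum_ncard_conicSet_inter_lineSet_eq_zero_or hcard hΛ htr hS ha hb hw

end MathonArc

end MaxArc

/-- extending a closed set of conics by a disjoint conic `F_{α_d,β_d,λ_d}`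
(satisfying the trace conditions) yields a closed set on the index set
`Λ ∪ {λ_d} ∪ (Λ + λ_d)`, and hence a maximal arc of degree `2(|Λ|+1)`. -/
theorem statement6 {F : Type} [Field F] [Fintype F] (h : ℕ)
    (hcard : Fintype.card F = 2 ^ h)
    (Λ : Finset F) (a b : F → F) (hclosed : MaxArc.IsClosedConicSet F h Λ a b)
    (αd βd lamd : F) (htrd : MaxArc.tr F h (αd * βd) = 1)
    (hlamd : lamd ∉ Λ) (hlamd0 : lamd ≠ 0)
    (hdisj : ∀ l ∈ Λ, MaxArc.tr F h
      (((a l * l + αd * lamd) / (l + lamd)) * ((b l * l + βd * lamd) / (l + lamd))) = 1) :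
    MaxArc.IsClosedConicSet F h (Λ ∪ {lamd} ∪ Λ.image (fun l => l + lamd))
      (fun μ => if μ ∈ Λ then a μ else if μ = lamd then αd else
        (a (μ - lamd) * (μ - lamd) + αd * lamd) / μ)
      (fun μ => if μ ∈ Λ then b μ else if μ = lamd then βd else
        (b (μ - lamd) * (μ - lamd) + βd * lamd) / μ) ∧
    MaxArc.IsMaximalArc F
      (MaxArc.mathonSet F (Λ ∪ {lamd} ∪ Λ.image (fun l => l + lamd))
        (fun μ => if μ ∈ Λ then a μ else if μ = lamd then αd else
          (a (μ - lamd) * (μ - lamd) + αd * lamd) / μ)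
        (fun μ => if μ ∈ Λ then b μ else if μ = lamd then βd else
          (b (μ - lamd) * (μ - lamd) + βd * lamd) / μ))
      (2 * (Λ.card + 1)) := by
  have := charP_of_card_eq_prime_pow hcard
  obtain ⟨hΛ, -, hS, -, -⟩ := MaxArc.isClosedConicSet_iff.mp hclosed
  have hext := hclosed.extend htrd hlamd hlamd0 hdisj
  refine ⟨hext, ?_⟩
  rw [← MaxArc.card_union_singleton_union_image_add hS hΛ hlamd hlamd0]
  exact MaxArc.isMaximalArc_mathonSet hcard hext
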